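/- For all real numbers x and y with 0 ≤ x ≤ π and 0 ≤ y ≤ π, the bivariate Michalewicz function with m = 10, f(x,y) = −sin(x)·(sin(x²/π))^20 − sin(y)·(sin(2y²/π))^20, satisfies f(x,y) ≥ −1.81. -/

import Mathlib

/-!
The `y`-term is at most `1` because `sin y ≤ 1` and an even power of a sine lies in `[0, 1]`, so
everything rests on `sin x · sin (x²/π)²⁰ ≤ 0.81` for `x ∈ [0, π]`; the true maximum is about
`0.8013`, near `x = 2.203`. For `π/2 ≤ a ≤ x ≤ b ≤ π/√2` the first factor decreases and the
second increases, so the product is at most `sin a · sin (b²/π)²⁰`. The values of `sin` at the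
finitely many breakpoints are bounded by writing them as cosines and using
`cos w = 1 - 2 sin² (w/2) ≤ 1 - 2 (w/2 - (w/2)³/6)²` together with `3.141592 < π < 3.141593`.
-/

/-- The bivariate Michalewicz test function with parameter m = 10. -/
noncomputable def michalewicz2 (x y : ℝ) : ℝ :=
  -Real.sin x * (Real.sin (x ^ 2 / Real.pi)) ^ 20
    - Real.sin y * (Real.sin (2 * y ^ 2 / Real.pi)) ^ 20

open Real

noncomputable def cosUpperBound (w : ℝ) : ℝ := 1 - 2 * (w / 2 - (w / 2) ^ 3 / 6) ^ 2

theorem cos_le_cosUpperBound {w : ℝ} (h0 : 0 ≤ w) (h4 : w ≤ 4) : cos w ≤ cosUpperBound w := by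
  have hsin : w / 2 - (w / 2) ^ 3 / 6 ≤ sin (w / 2) := sin_ge_sub_cube (by linarith)
  have hpos : 0 ≤ w / 2 - (w / 2) ^ 3 / 6 := by
    have : 0 ≤ 6 - (w / 2) ^ 2 := by nlinarith
    nlinarith [mul_nonneg h0 this]
  have hsq := pow_le_pow_left₀ hpos hsin 2
  calc cos w = 1 - 2 * sin (w / 2) ^ 2 := by
        rw [← cos_two_mul_eq_one_sub, mul_div_cancel₀ w two_ne_zero]
    _ ≤ cosUpperBound w := by rw [cosUpperBound]; linarith

theorem sin_le_cosUpperBound {a x : ℝ} (ha : 3.141593 / 2 ≤ a) (hax : a ≤ x) (hxπ : x ≤ π) :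
    sin x ≤ cosUpperBound (a - 3.141593 / 2) := by
  have hπ := pi_lt_d6
  calc sin x = cos (x - π / 2) := (cos_sub_pi_div_two x).symm
    _ ≤ cos (a - 3.141593 / 2) :=
      cos_le_cos_of_nonneg_of_le_pi (by linarith) (by linarith) (by linarith)
    _ ≤ cosUpperBound (a - 3.141593 / 2) := cos_le_cosUpperBound (by linarith) (by linarith)

theorem sin_sq_div_pi_le_cosUpperBound {b x : ℝ} (hx : 0 ≤ x) (hxb : x ≤ b)
    (hb : b ^ 2 ≤ 3.141592 ^ 2 / 2) :
    sin (x ^ 2 / π) ≤ cosUpperBound (3.141592 / 2 - b ^ 2 / 3.141592) := by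
  have hπ := pi_gt_d6
  have hxb' : x ^ 2 / π ≤ b ^ 2 / 3.141592 :=
    calc x ^ 2 / π ≤ b ^ 2 / π := by gcongr
      _ ≤ b ^ 2 / 3.141592 := div_le_div_of_nonneg_left (sq_nonneg b) (by norm_num) hπ.le
  have hb' : b ^ 2 / 3.141592 ≤ 3.141592 / 2 := by rw [div_le_iff₀ (by norm_num)]; linarith
  have hx' : 0 ≤ x ^ 2 / π := by positivity
  calc sin (x ^ 2 / π) = cos (π / 2 - x ^ 2 / π) := (cos_pi_div_two_sub _).symm
    _ ≤ cos (3.141592 / 2 - b ^ 2 / 3.141592) :=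
      cos_le_cos_of_nonneg_of_le_pi (by linarith) (by linarith) (by linarith)
    _ ≤ cosUpperBound (3.141592 / 2 - b ^ 2 / 3.141592) :=
      cos_le_cosUpperBound (by linarith) (by linarith [show 0 ≤ b ^ 2 / 3.141592 by positivity])

-- Below `2.11` the factor `sin (x²/π)²⁰` alone is below `0.81`, above `2.2` the factor `sin x` is.
theorem sin_mul_sin_sq_div_pi_pow_twenty_le {x : ℝ} (hx : 0 ≤ x) (hxπ : x ≤ π) :
    sin x * sin (x ^ 2 / π) ^ 20 ≤ 0.81 := by
  have hs : 0 ≤ sin x := sin_nonneg_of_nonneg_of_le_pi hx hxπ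
  have ht : 0 ≤ sin (x ^ 2 / π) := by
    refine sin_nonneg_of_nonneg_of_le_pi (by positivity) ?_
    rw [div_le_iff₀ pi_pos]
    nlinarith
  have bound {A B : ℝ} (hA : sin x ≤ A) (hB : sin (x ^ 2 / π) ≤ B) :
      sin x * sin (x ^ 2 / π) ^ 20 ≤ A * B ^ 20 :=
    mul_le_mul hA (pow_le_pow_left₀ ht hB 20) (by positivity) (hs.trans hA)
  obtain h | h₁ := le_total x 2.11
  · exact (bound (sin_le_one x) (sin_sq_div_pi_le_cosUpperBound hx h (by norm_num))).trans
      (by norm_num [cosUpperBound])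
  obtain h | h₂ := le_total x 2.16
  · exact (bound (sin_le_cosUpperBound (by norm_num) h₁ hxπ)
      (sin_sq_div_pi_le_cosUpperBound hx h (by norm_num))).trans (by norm_num [cosUpperBound])
  obtain h | h₃ := le_total x 2.18
  · exact (bound (sin_le_cosUpperBound (by norm_num) h₂ hxπ)
      (sin_sq_div_pi_le_cosUpperBound hx h (by norm_num))).trans (by norm_num [cosUpperBound])
  obtain h | h₄ := le_total x 2.19
  · exact (bound (sin_le_cosUpperBound (by norm_num) h₃ hxπ)
      (sin_sq_div_pi_le_cosUpperBound hx h (by norm_num))).trans (by norm_num [cosUpperBound])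
  obtain h | h₅ := le_total x 2.2
  · exact (bound (sin_le_cosUpperBound (by norm_num) h₄ hxπ)
      (sin_sq_div_pi_le_cosUpperBound hx h (by norm_num))).trans (by norm_num [cosUpperBound])
  · exact (bound (sin_le_cosUpperBound (by norm_num) h₅ hxπ) (sin_le_one _)).trans
      (by norm_num [cosUpperBound])

theorem sin_mul_sin_pow_le_one (a b : ℝ) {n : ℕ} (hn : Even n) : sin a * sin b ^ n ≤ 1 :=
  mul_le_one₀ (sin_le_one a) (hn.pow_nonneg _)
    (hn.pow_abs (sin b) ▸ pow_le_one₀ (abs_nonneg _) (abs_sin_le_one b))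

theorem michalewicz2_lower_bound_general (x y : ℝ) (hx : 0 ≤ x ∧ x ≤ Real.pi) :
    michalewicz2 x y ≥ -1.81 := by
  have hx' := sin_mul_sin_sq_div_pi_pow_twenty_le hx.1 hx.2
  have hy' := sin_mul_sin_pow_le_one y (2 * y ^ 2 / π) (by decide : Even 20)
  rw [michalewicz2]
  linarith

theorem michalewicz2_lower_bound (x y : ℝ) (hx : 0 ≤ x ∧ x ≤ Real.pi)
    (hy : 0 ≤ y ∧ y ≤ Real.pi) : michalewicz2 x y ≥ -1.81 :=
  michalewicz2_lower_bound_general x y hx
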